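/- Let L be a countably infinite discrete abelian group with compact dual L̂. If Γ ⊆ L is a nonempty finite set such that all Fourier coefficients of g_Γ are either 0 or 1, i.e., g_Γ(τ) = ∑_{k∈S} e(k,τ) for some finite set S ⊆ L, then Γ = m + M for some m ∈ L and some finite subgroup M of L, and moreover S = M. -/

import Mathlib

/-!
Expanding the square gives `#Γ • g_Γ = ∑ₖ #(Γ ∩ (k +ᵥ Γ)) • e(k, ·)`. By Dedekind's theorem the
characters `e(k, ·)` of the dual are linearly independent (they are distinct because `ℚ/ℤ`-valued
characters already separate the points of `L`), so comparing coefficients gives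
`#(Γ ∩ (k +ᵥ Γ)) = #Γ` for `k ∈ S` and `= 0` otherwise. Hence `S` is exactly the stabilizer of `Γ`
under translation, a finite subgroup. Evaluating at `τ = 1` gives `#S = #Γ`, so for `m ∈ Γ` the
coset `m + S ⊆ Γ` is all of `Γ`.
-/

open MeasureTheory
open scoped ENNReal

noncomputable section

variable {L : Type*} [AddCommGroup L] [TopologicalSpace L]

/-- The bi-character `e(k,τ) = τ(k)` of a discrete abelian group `L`, valued in `ℂ`. -/
def bichar (k : L) (τ : PontryaginDual (Multiplicative L)) : ℂ :=
  (τ (Multiplicative.ofAdd k) : ℂ)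

/-- `g_Γ(τ) = (1/card Γ)·|∑_{k∈Γ} e(k,τ)|²`. -/
def gfun (Γ : Finset L) (τ : PontryaginDual (Multiplicative L)) : ℝ :=
  (Γ.card : ℝ)⁻¹ * ‖∑ k ∈ Γ, bichar k τ‖ ^ 2

open Finset
open scoped Pointwise

section AddGroup
variable {G α : Type*} [AddGroup G] [AddAction G α] [DecidableEq α]

lemma card_inter_vadd_eq_card_iff {s : Finset α} {k : G} :
    #(s ∩ (k +ᵥ s)) = #s ↔ k ∈ AddAction.stabilizer G s := by
  rw [AddAction.mem_stabilizer_finset_iff_subset_vadd_finset, ← inter_eq_left]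
  exact ⟨eq_of_subset_of_card_le inter_subset_left ∘ ge_of_eq, congrArg card⟩

end AddGroup

section AddCommGroup
variable {G : Type*} [AddCommGroup G] [DecidableEq G]

lemma mem_vadd_finset_iff_sub_mem {s : Finset G} {k a : G} : a ∈ k +ᵥ s ↔ a - k ∈ s := by
  simpa [neg_add_eq_sub] using mem_neg_vadd_finset_iff (a := -k) (b := a) (s := s)

lemma card_filter_sub_eq_card_inter_vadd (s : Finset G) (k : G) :
    #{p ∈ s ×ˢ s | p.1 - p.2 = k} = #(s ∩ (k +ᵥ s)) := by
  refine card_bij' (fun p _ => p.1) (fun a _ => (a, a - k)) ?_ ?_ ?_ ?_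
  · rintro ⟨a, b⟩ hp
    obtain ⟨⟨ha, hb⟩, rfl⟩ := by simpa only [mem_filter, mem_product] using hp
    simpa [mem_vadd_finset_iff_sub_mem, ha] using hb
  · intro a ha
    simp_all [mem_vadd_finset_iff_sub_mem]
  · rintro ⟨a, b⟩ hp
    obtain ⟨-, rfl⟩ := by simpa only [mem_filter, mem_product] using hp
    simp
  · intro a _
    rfl

lemma eq_image_add_of_card_le {s t : Finset G} (ht : ∀ k ∈ t, k ∈ AddAction.stabilizer G s)
    (hcard : #s ≤ #t) {m : G} (hm : m ∈ s) : s = t.image (m + ·) := by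
  refine (eq_of_subset_of_card_le ?_ ?_).symm
  · simp only [image_subset_iff]
    intro k hk
    simpa [add_comm] using AddAction.mem_stabilizer_finset'.1 (ht k hk) hm
  · rwa [card_image_of_injective _ (add_right_injective m)]

end AddCommGroup

def castRatAddCircle : AddCircle (1 : ℚ) →+ AddCircle (1 : ℝ) :=
  QuotientAddGroup.map _ _ (Rat.castHom ℝ).toAddMonoidHom <| by
    rintro _ ⟨n, rfl⟩
    exact ⟨n, by simp⟩

lemma castRatAddCircle_injective : Function.Injective castRatAddCircle := by
  refine (injective_iff_map_eq_zero _).2 fun x hx => ?_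
  induction x using QuotientAddGroup.induction_on with
  | H q =>
    obtain ⟨n, hn⟩ := (AddCircle.coe_eq_zero_iff (1 : ℝ)).1 hx
    refine (AddCircle.coe_eq_zero_iff 1).2 ⟨n, ?_⟩
    rw [zsmul_one] at hn ⊢
    exact Rat.cast_injective (by simpa using hn)

def bicharHom (k : L) : PontryaginDual (Multiplicative L) →* ℂ where
  toFun := bichar k
  map_one' := rfl
  map_mul' _ _ := rfl

lemma bichar_add (a b : L) (τ : PontryaginDual (Multiplicative L)) :
    bichar (a + b) τ = bichar a τ * bichar b τ := by
  simp [bichar]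

lemma bichar_sub (a b : L) (τ : PontryaginDual (Multiplicative L)) :
    bichar (a - b) τ = bichar a τ * starRingEnd ℂ (bichar b τ) := by
  rw [bichar, bichar, bichar, ← Circle.coe_inv_eq_conj, ← Circle.coe_mul, ← map_inv, ← map_mul,
    ← ofAdd_neg, ← ofAdd_add, sub_eq_add_neg]

lemma bichar_one (k : L) : bichar k 1 = 1 := rfl

lemma sum_sum_bichar_sub_eq [DecidableEq L] (Γ : Finset L) {T : Finset L} (hT : Γ - Γ ⊆ T)
    (τ : PontryaginDual (Multiplicative L)) :
    ∑ a ∈ Γ, ∑ b ∈ Γ, bichar (a - b) τ = ∑ k ∈ T, (#(Γ ∩ (k +ᵥ Γ)) : ℂ) * bichar k τ := by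
  have hmaps : ∀ p ∈ Γ ×ˢ Γ, p.1 - p.2 ∈ T := fun p hp =>
    hT (sub_mem_sub (mem_product.1 hp).1 (mem_product.1 hp).2)
  rw [← sum_product' (f := fun a b => bichar (a - b) τ),
    ← sum_fiberwise_of_maps_to' hmaps (fun k => bichar k τ)]
  simp_rw [sum_const, card_filter_sub_eq_card_inter_vadd, nsmul_eq_mul]

lemma card_mul_gfun (Γ : Finset L) (τ : PontryaginDual (Multiplicative L)) :
    (#Γ : ℂ) * gfun Γ τ = ∑ a ∈ Γ, ∑ b ∈ Γ, bichar (a - b) τ := by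
  obtain rfl | hΓ := Γ.eq_empty_or_nonempty
  · simp
  have hsq : (‖∑ k ∈ Γ, bichar k τ‖ ^ 2 : ℂ) = ∑ a ∈ Γ, ∑ b ∈ Γ, bichar (a - b) τ := by
    simp_rw [← Complex.mul_conj', map_sum, sum_mul_sum, bichar_sub]
  rw [gfun, Complex.ofReal_mul, ← mul_assoc, Complex.ofReal_inv, Complex.ofReal_natCast,
    mul_inv_cancel₀ (by exact_mod_cast hΓ.card_pos.ne'), one_mul, Complex.ofReal_pow, hsq]

lemma gfun_one (Γ : Finset L) : gfun Γ 1 = #Γ := by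
  simp [gfun, bichar_one, sq, ← mul_assoc]

lemma card_eq_of_gfun_eq {Γ S : Finset L} (hcoeff : ∀ τ, (gfun Γ τ : ℂ) = ∑ k ∈ S, bichar k τ) :
    #S = #Γ := by
  have := hcoeff 1
  simp only [gfun_one, bichar_one, sum_const, nsmul_eq_mul, mul_one] at this
  exact_mod_cast this.symm

section DiscreteTopology
variable [DiscreteTopology L]

def CharacterModule.toPontryaginDual (c : CharacterModule L) :
    PontryaginDual (Multiplicative L) where
  toFun x := AddCircle.toCircle (castRatAddCircle (c x.toAdd))
  map_one' := by simp
  map_mul' x y := by simp [AddCircle.toCircle_add]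
  continuous_toFun := continuous_of_discreteTopology

lemma exists_bichar_ne_one {k : L} (hk : k ≠ 0) : ∃ τ, bichar k τ ≠ 1 := by
  obtain ⟨c, hc⟩ := CharacterModule.exists_character_apply_ne_zero_of_ne_zero hk
  refine ⟨c.toPontryaginDual, fun h => hc (castRatAddCircle_injective ?_)⟩
  rw [map_zero]
  apply AddCircle.injective_toCircle one_ne_zero
  rw [AddCircle.toCircle_zero]
  exact Circle.coe_eq_one.1 h

lemma bicharHom_injective : Function.Injective (bicharHom (L := L)) := by
  intro k k' h
  by_contra hne
  obtain ⟨τ, hτ⟩ := exists_bichar_ne_one (sub_ne_zero.2 hne)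
  have hkk' : bichar k τ = bichar (k - k') τ * bichar k' τ := by rw [← bichar_add, sub_add_cancel]
  rw [show bichar k τ = bichar k' τ from DFunLike.congr_fun h τ] at hkk'
  exact hτ ((mul_eq_right₀ (Circle.coe_ne_zero _)).1 hkk'.symm)

theorem linearIndependent_bichar : LinearIndependent ℂ (bichar (L := L)) := by
  exact (linearIndependent_monoidHom _ ℂ).comp bicharHom bicharHom_injective

lemma card_inter_vadd_eq_of_gfun_eq [DecidableEq L] {Γ S : Finset L}
    (hcoeff : ∀ τ, (gfun Γ τ : ℂ) = ∑ k ∈ S, bichar k τ) (k : L) :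
    #(Γ ∩ (k +ᵥ Γ)) = if k ∈ S then #Γ else 0 := by
  set T := insert k (Γ - Γ ∪ S)
  have hexp : ∀ τ, ∑ j ∈ T, (#(Γ ∩ (j +ᵥ Γ)) : ℂ) * bichar j τ =
      ∑ j ∈ T, (if j ∈ S then (#Γ : ℂ) else 0) * bichar j τ := fun τ => by
    rw [← sum_sum_bichar_sub_eq Γ (subset_union_left.trans (subset_insert _ _)),
      ← card_mul_gfun, hcoeff]
    simp_rw [ite_mul, zero_mul, sum_ite_mem, mul_sum]
    rw [inter_eq_right.2 (subset_union_right.trans (subset_insert _ _))]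
  have := linearIndependent_iff'ₛ.1 linearIndependent_bichar T (fun j => (#(Γ ∩ (j +ᵥ Γ)) : ℂ))
    (fun j => if j ∈ S then (#Γ : ℂ) else 0)
    (funext fun τ => by simpa only [Finset.sum_apply, Pi.smul_apply, smul_eq_mul] using hexp τ) k
    (mem_insert_self _ _)
  split_ifs at this ⊢ <;> exact_mod_cast this

lemma mem_iff_mem_stabilizer_of_gfun_eq [DecidableEq L] {Γ S : Finset L} (hΓ : Γ.Nonempty)
    (hcoeff : ∀ τ, (gfun Γ τ : ℂ) = ∑ k ∈ S, bichar k τ) (k : L) :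
    k ∈ S ↔ k ∈ AddAction.stabilizer L Γ := by
  rw [← card_inter_vadd_eq_card_iff, card_inter_vadd_eq_of_gfun_eq hcoeff]
  split_ifs with hk
  · simp [hk]
  · simp [hk, hΓ.card_pos.ne]

end DiscreteTopology

theorem gfun_eq_sum_bichar_imp_coset_general
    [DiscreteTopology L] [DecidableEq L]
    (Γ : Finset L) (hΓ : Γ.Nonempty) (S : Finset L)
    (hcoeff : ∀ τ, (gfun Γ τ : ℂ) = ∑ k ∈ S, bichar k τ) :
    ∃ (m : L) (M : AddSubgroup L) (hM : (M : Set L).Finite),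
      Γ = hM.toFinset.image (fun x => m + x) ∧ S = hM.toFinset := by
  have hS := mem_iff_mem_stabilizer_of_gfun_eq hΓ hcoeff
  have hM : (AddAction.stabilizer L Γ : Set L).Finite := S.finite_toSet.subset fun k => (hS k).2
  have hMS : hM.toFinset = S := by ext; simp [hS]
  obtain ⟨m, hm⟩ := hΓ
  refine ⟨m, AddAction.stabilizer L Γ, hM, ?_, hMS.symm⟩
  rw [hMS]
  exact eq_image_add_of_card_le (fun k => (hS k).1) (card_eq_of_gfun_eq hcoeff).ge hm

/-- If `Γ ⊆ L` is a nonempty finite set such that all Fourier coefficients of `g_Γ` are `0`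
or `1`, i.e. `g_Γ(τ) = ∑_{k∈S} e(k,τ)` for some finite `S ⊆ L`, then `Γ` is a coset `m + M`
of a finite subgroup `M` of `L`, and `S = M`. -/
theorem gfun_eq_sum_bichar_imp_coset
    [DiscreteTopology L] [Countable L] [Infinite L] [DecidableEq L]
    (Γ : Finset L) (hΓ : Γ.Nonempty) (S : Finset L)
    (hcoeff : ∀ τ, (gfun Γ τ : ℂ) = ∑ k ∈ S, bichar k τ) :
    ∃ (m : L) (M : AddSubgroup L) (hM : (M : Set L).Finite),
      Γ = hM.toFinset.image (fun x => m + x) ∧ S = hM.toFinset :=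
  gfun_eq_sum_bichar_imp_coset_general Γ hΓ S hcoeff
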